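/- For the weighted trinomial coefficient defined by C(n;k) = [t^k](1+3t+t²)^n, the number of skew Dyck paths of semilength n (n ≥ 1) equals C(n-1;n) + C(n-1;n-1) - C(n-1;n-2) - C(n-1;n-3), specializing w=1 in the identity [x^n](1+v) = [v^n](1-v)(1+v)²(1+(2+w)v+v²)^{n-1} with trinomial weight (1,2+w,1). -/

import Mathlib

inductive SkewStep : Type
  | up : SkewStep
  | down : SkewStep
  | red : SkewStep
deriving DecidableEq

def SkewStep.val : SkewStep → ℤ
  | SkewStep.up => 1
  | SkewStep.down => -1
  | SkewStep.red => -1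

def SkewStep.ok (a b : SkewStep) : Prop :=
  ¬ (a = SkewStep.up ∧ b = SkewStep.red) ∧ ¬ (a = SkewStep.red ∧ b = SkewStep.up)

def IsSkewPrefix (l : List SkewStep) : Prop :=
  l.Chain' SkewStep.ok ∧ ∀ k, 0 ≤ ((l.take k).map SkewStep.val).sum

def IsSkewPath (l : List SkewStep) (j : ℤ) : Prop :=
  IsSkewPrefix l ∧ (l.map SkewStep.val).sum = j

noncomputable def skewDyckCount (n : ℕ) : ℕ :=
  Nat.card {l : List SkewStep // l.length = 2 * n ∧ IsSkewPath l 0}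

open Polynomial

/-- The weighted trinomial coefficient `binom(n;1,3,1 // k) = [t^k](1+3t+t²)^n`,
for an integer index `k` (zero when `k < 0`). -/
noncomputable def trinom (n : ℕ) (k : ℤ) : ℤ :=
  if 0 ≤ k then ((1 + 3 * X + X ^ 2 : Polynomial ℤ) ^ n).coeff k.toNat else 0

namespace SkewProof


open List

variable {α : Type*}

def sval (v : α → ℤ) (l : List α) : ℤ := (l.map v).sum

@[simp] lemma sval_nil (v : α → ℤ) : sval v [] = 0 := rfl
@[simp] lemma sval_cons (v : α → ℤ) (a : α) (l : List α) :
    sval v (a :: l) = v a + sval v l := by simp [sval]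
@[simp] lemma sval_append (v : α → ℤ) (l l' : List α) :
    sval v (l ++ l') = sval v l + sval v l' := by simp [sval]

/-- nonneg prefix sums, via the prefix order -/
def NNP (v : α → ℤ) (l : List α) : Prop := ∀ t, t <+: l → 0 ≤ sval v t

lemma nnp_iff_take (v : α → ℤ) (l : List α) :
    (∀ k, 0 ≤ sval v (l.take k)) ↔ NNP v l := by
  constructor
  · intro h t ht
    rw [List.prefix_iff_eq_take.mp ht]
    exact h _
  · intro h k
    exact h _ (List.take_prefix _ _)

lemma prefix_append_cases : ∀ {p t q : List α}, t <+: p ++ q →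
    t <+: p ∨ ∃ r, r <+: q ∧ t = p ++ r := by
  intro p
  induction p with
  | nil => intro t q h; exact Or.inr ⟨t, by simpa using h, by simp⟩
  | cons a p ih =>
    intro t q h
    rcases List.prefix_cons_iff.mp h with h0 | ⟨t', rfl, ht'⟩
    · exact Or.inl (h0 ▸ List.nil_prefix)
    · rcases ih ht' with h1 | ⟨r, hr, rfl⟩
      · exact Or.inl (List.cons_prefix_cons.mpr ⟨rfl, h1⟩)
      · exact Or.inr ⟨r, hr, by simp⟩

lemma prefix_of_prefix_append {t l l' : List α} (h : t <+: l ++ l')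
    (hl : t.length ≤ l.length) : t <+: l := by
  have h2 := List.prefix_iff_eq_take.mp h
  rw [List.take_append_of_le_length hl] at h2
  exact List.prefix_iff_eq_take.mpr h2

lemma NNP.append_mid (v : α → ℤ) {u x : α} (hu : v u = 1) (hx : v x = -1) {p q : List α}
    (hp : NNP v p) (hps : sval v p = 0) (hq : NNP v q) :
    NNP v (u :: (p ++ x :: q)) := by
  intro t ht
  rcases List.prefix_cons_iff.mp ht with rfl | ⟨t', rfl, ht'⟩
  · simp
  · rcases prefix_append_cases ht' with h1 | ⟨r, hr, rfl⟩
    · have := hp _ h1; simp [hu]; linarith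
    · rcases List.prefix_cons_iff.mp hr with rfl | ⟨r', rfl, hr'⟩
      · simp [hu, hps]
      · have := hq _ hr'
        simp [hu, hx, hps]; linarith

lemma NNP.head_nonneg {v : α → ℤ} {l : List α} (hp : NNP v l) (h : l ≠ []) :
    0 ≤ v (l.head h) := by
  have : [l.head h] <+: l := by
    conv_rhs => rw [← List.cons_head_tail h]
    exact ⟨l.tail, rfl⟩
  have := hp _ this
  simpa using this

lemma NNP.last_nonpos {v : α → ℤ} {l : List α} (hp : NNP v l) (hs : sval v l = 0)
    (h : l ≠ []) : v (l.getLast h) ≤ 0 := by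
  have h1 := hp _ (List.dropLast_prefix l)
  have e := List.dropLast_append_getLast h
  have h2 : sval v (l.dropLast ++ [l.getLast h]) = 0 := by rw [e]; exact hs
  rw [sval_append] at h2
  simp at h2
  linarith

/-- first hit of level `-1`, starting from height `h`. -/
lemma first_hit (v : α → ℤ) (hv : ∀ a, -1 ≤ v a) :
    ∀ (t : List α) (h : ℕ), (∀ r, r <+: t → -1 ≤ (h : ℤ) + sval v r) →
    (h : ℤ) + sval v t = -1 →
    ∃ p x q, t = p ++ x :: q ∧ v x = -1 ∧
      (∀ r, r <+: p → 0 ≤ (h : ℤ) + sval v r) ∧ (h : ℤ) + sval v p = 0 ∧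
      NNP v q ∧ sval v q = 0 := by
  intro t
  induction t with
  | nil => intro h _ hsum; rw [sval_nil] at hsum; omega
  | cons a t ih =>
    intro h hpre hsum
    by_cases hc : (h : ℤ) + v a = -1
    · have hh0 : (h : ℤ) = 0 ∧ v a = -1 := by have := hv a; constructor <;> omega
      refine ⟨[], a, t, by simp, hh0.2, ?_, by simp [hh0.1], ?_, ?_⟩
      · intro r hr; rw [List.prefix_nil.mp hr]; simp
      · intro r hr
        have := hpre (a :: r) (List.cons_prefix_cons.mpr ⟨rfl, hr⟩)
        rw [sval_cons] at this
        omega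
      · rw [sval_cons] at hsum; omega
    · have h2 : 0 ≤ (h : ℤ) + v a := by
        have := hpre [a] ⟨t, rfl⟩
        simp at this; omega
      set h' : ℕ := ((h : ℤ) + v a).toNat with hh'
      have hh'' : (h' : ℤ) = (h : ℤ) + v a := Int.toNat_of_nonneg h2
      obtain ⟨p, x, q, rfl, hx, hnn, hps, hq, hqs⟩ := ih h'
        (fun r hr => by
          have := hpre (a :: r) (List.cons_prefix_cons.mpr ⟨rfl, hr⟩)
          simp at this; omega)
        (by simp at hsum; omega)
      refine ⟨a :: p, x, q, rfl, hx, ?_, by rw [sval_cons]; omega, hq, hqs⟩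
      intro r hr
      rcases List.prefix_cons_iff.mp hr with rfl | ⟨r', rfl, hr'⟩
      · simp
      · have := hnn r' hr'
        rw [sval_cons]
        omega

lemma firstret_len_aux (v : α → ℤ) {p p' : List α} {x x' : α} {q q' : List α}
    (hx : v x = -1) (hp' : NNP v p') (hs : sval v p = 0)
    (e : p ++ x :: q = p' ++ x' :: q') : ¬ (p.length < p'.length) := by
  intro hlt
  have hpre : p ++ [x] <+: p' := by
    apply prefix_of_prefix_append (l' := x' :: q')
    · rw [← e]
      have h3 : p ++ [x] ++ q = p ++ x :: q := by simp
      exact h3 ▸ List.prefix_append _ _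
    · simp; omega
  have h0 := hp' _ hpre
  rw [sval_append] at h0
  simp [hx] at h0
  omega

lemma firstret_len_unique (v : α → ℤ) {p p' : List α} {x x' : α} {q q' : List α}
    (hx : v x = -1) (hx' : v x' = -1)
    (hp : NNP v p) (hp' : NNP v p') (hs : sval v p = 0) (hs' : sval v p' = 0)
    (e : p ++ x :: q = p' ++ x' :: q') : p.length = p'.length := by
  have h1 := firstret_len_aux v hx hp' hs e
  have h2 := firstret_len_aux v hx' hp hs' e.symm
  omega


open List

lemma finite_cond (β : Type*) [Finite β] (m : ℕ) (P : List β → Prop) :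
    Finite {l : List β // l.length = m ∧ P l} := by
  have h : {l : List β | l.length = m ∧ P l}.Finite :=
    (List.finite_length_eq β m).subset (fun l hl => hl.1)
  exact h.to_subtype

lemma card_sigma' {ι : Type*} [Fintype ι] (f : ι → Type*) [∀ i, Finite (f i)] :
    Nat.card (Σ i, f i) = ∑ i, Nat.card (f i) := by
  letI : ∀ i, Fintype (f i) := fun i => Fintype.ofFinite (f i)
  simp [Nat.card_eq_fintype_card]

def mval (a : Fin 5) : ℤ := if a = 0 then 1 else if a = 4 then -1 else 0

lemma mval_zero : mval 0 = 1 := rfl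
lemma mval_one : mval 1 = 0 := rfl
lemma mval_two : mval 2 = 0 := rfl
lemma mval_three : mval 3 = 0 := rfl
lemma mval_four : mval 4 = -1 := rfl

noncomputable def Nk (m : ℕ) (s : ℤ) : ℕ :=
  Nat.card {l : List (Fin 5) // l.length = m ∧ sval mval l = s}

noncomputable def fzc (m : ℕ) (s : ℤ) : ℕ :=
  Nat.card {l : List (Fin 5) // l.length = m ∧ (NNP mval l ∧ sval mval l = s)}

lemma Nk_zero (s : ℤ) : Nk 0 s = if s = 0 then 1 else 0 := by
  unfold Nk
  split_ifs with h
  · subst h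
    haveI : Unique {l : List (Fin 5) // l.length = 0 ∧ sval mval l = 0} :=
      { default := ⟨[], by simp⟩
        uniq := fun ⟨l, hl⟩ => by
          have : l = [] := List.length_eq_zero_iff.mp hl.1
          exact Subtype.ext this }
    exact Nat.card_unique
  · haveI : IsEmpty {l : List (Fin 5) // l.length = 0 ∧ sval mval l = s} := by
      refine ⟨fun ⟨l, hl⟩ => ?_⟩
      have h1 : l = [] := List.length_eq_zero_iff.mp hl.1
      subst h1
      exact h hl.2.symm
    exact Nat.card_of_isEmpty

lemma Nk_succ (m : ℕ) (s : ℤ) :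
    Nk (m+1) s = Nk m (s-1) + 3 * Nk m s + Nk m (s+1) := by
  haveI := fun (m : ℕ) (s : ℤ) => finite_cond (Fin 5) m (fun l => sval mval l = s)
  have key : Nat.card (Σ a : Fin 5, {l : List (Fin 5) // l.length = m ∧ sval mval l = s - mval a})
      = Nk (m+1) s := by
    apply Nat.card_eq_of_bijective (fun x => ⟨x.1 :: x.2.1, by
        refine ⟨by simp [x.2.2.1], ?_⟩
        rw [sval_cons, x.2.2.2]; ring⟩)
    constructor
    · rintro ⟨a, l, hl⟩ ⟨b, t, ht⟩ hab
      simp only [Subtype.mk.injEq, List.cons.injEq] at hab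
      obtain ⟨rfl, h2⟩ := hab
      subst h2
      rfl
    · rintro ⟨l, hlen, hsum⟩
      cases l with
      | nil => simp at hlen
      | cons a t =>
        exact ⟨⟨a, t, by simpa using hlen, by rw [sval_cons] at hsum; omega⟩, rfl⟩
  rw [← key, card_sigma', Fin.sum_univ_five, mval_zero, mval_one, mval_two, mval_three,
    mval_four, sub_zero, sub_neg_eq_add]
  show Nk m (s-1) + Nk m s + Nk m s + Nk m s + Nk m (s+1) = _
  ring

lemma fzc_neg (m : ℕ) (s : ℤ) (hs : s < 0) : fzc m s = 0 := by
  haveI : IsEmpty {l : List (Fin 5) // l.length = m ∧ (NNP mval l ∧ sval mval l = s)} := by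
    refine ⟨fun ⟨l, hl⟩ => ?_⟩
    have := hl.2.1 l (List.prefix_refl l)
    rw [hl.2.2] at this
    omega
  exact Nat.card_of_isEmpty

lemma fzc_zero (s : ℤ) : fzc 0 s = if s = 0 then 1 else 0 := by
  unfold fzc
  split_ifs with h
  · subst h
    haveI : Unique {l : List (Fin 5) // l.length = 0 ∧ (NNP mval l ∧ sval mval l = 0)} :=
      { default := ⟨[], by simp, by intro t ht; rw [List.prefix_nil.mp ht]; simp, by simp⟩
        uniq := fun ⟨l, hl⟩ => Subtype.ext (List.length_eq_zero_iff.mp hl.1) }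
    exact Nat.card_unique
  · haveI : IsEmpty {l : List (Fin 5) // l.length = 0 ∧ (NNP mval l ∧ sval mval l = s)} := by
      refine ⟨fun ⟨l, hl⟩ => ?_⟩
      have h1 : l = [] := List.length_eq_zero_iff.mp hl.1
      subst h1
      exact h hl.2.2.symm
    exact Nat.card_of_isEmpty

lemma fzc_succ (m : ℕ) (s : ℤ) (hs : 0 ≤ s) :
    fzc (m+1) s = fzc m (s-1) + 3 * fzc m s + fzc m (s+1) := by
  haveI := fun (m : ℕ) (s : ℤ) =>
    finite_cond (Fin 5) m (fun l => NNP mval l ∧ sval mval l = s)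
  have key : Nat.card (Σ a : Fin 5,
      {l : List (Fin 5) // l.length = m ∧ (NNP mval l ∧ sval mval l = s - mval a)})
      = fzc (m+1) s := by
    apply Nat.card_eq_of_bijective (fun x => ⟨x.2.1 ++ [x.1], by
        obtain ⟨hlen, hnn, hsum⟩ := x.2.2
        refine ⟨by simp [hlen], ?_, ?_⟩
        · intro r hr
          rcases prefix_append_cases hr with h1 | ⟨r', hr', rfl⟩
          · exact hnn _ h1
          · rcases List.prefix_cons_iff.mp hr' with rfl | ⟨r'', rfl, hr''⟩
            · simpa using hnn _ (List.prefix_refl _)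
            · rw [List.prefix_nil.mp hr'']
              rw [sval_append, hsum, sval_cons, sval_nil]
              omega
        · rw [sval_append, hsum, sval_cons, sval_nil]; ring⟩)
    constructor
    · rintro ⟨a, l, hl⟩ ⟨b, t, ht⟩ hab
      simp only [Subtype.mk.injEq] at hab
      obtain ⟨h1, h2⟩ := List.append_inj' hab (by simp)
      obtain rfl : a = b := by simpa using h2
      subst h1
      rfl
    · rintro ⟨l, hlen, hnn, hsum⟩
      have hne : l ≠ [] := by intro h; subst h; simp at hlen
      refine ⟨⟨l.getLast hne, l.dropLast, ?_, ?_, ?_⟩, ?_⟩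
      · have := List.length_dropLast (xs := l); omega
      · intro r hr
        exact hnn _ (hr.trans (List.dropLast_prefix l))
      · have e := List.dropLast_append_getLast hne
        have h2 : sval mval (l.dropLast ++ [l.getLast hne]) = s := by rw [e]; exact hsum
        rw [sval_append, sval_cons, sval_nil] at h2
        omega
      · exact Subtype.ext (List.dropLast_append_getLast hne)
  rw [← key, card_sigma', Fin.sum_univ_five, mval_zero, mval_one, mval_two, mval_three,
    mval_four, sub_zero, sub_neg_eq_add]
  show fzc m (s-1) + fzc m s + fzc m s + fzc m s + fzc m (s+1) = _
  ring

lemma sval_bound : ∀ l : List (Fin 5), |sval mval l| ≤ l.length := by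
  intro l
  induction l with
  | nil => simp
  | cons a t ih =>
    rw [sval_cons]
    have h1 : |mval a| ≤ 1 := by revert a; decide
    have := abs_add_le (mval a) (sval mval t)
    simp only [List.length_cons]
    push_cast
    omega

lemma Nk_big (m : ℕ) (s : ℤ) (h : (m : ℤ) < |s|) : Nk m s = 0 := by
  haveI : IsEmpty {l : List (Fin 5) // l.length = m ∧ sval mval l = s} := by
    refine ⟨fun ⟨l, hl⟩ => ?_⟩
    have := sval_bound l
    rw [hl.2, hl.1] at this
    omega
  exact Nat.card_of_isEmpty

def mneg (a : Fin 5) : Fin 5 := if a = 0 then 4 else if a = 4 then 0 else a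

lemma mneg_invol : Function.Involutive mneg := by intro a; revert a; decide

lemma mval_mneg (a : Fin 5) : mval (mneg a) = - mval a := by revert a; decide

lemma sval_map_mneg (l : List (Fin 5)) : sval mval (l.map mneg) = - sval mval l := by
  induction l with
  | nil => simp
  | cons a t ih => simp [sval_cons, mval_mneg, ih]; ring

lemma Nk_symm (m : ℕ) (s : ℤ) : Nk m s = Nk m (-s) := by
  apply Nat.card_eq_of_bijective (fun x => ⟨x.1.map mneg, by simp [x.2.1], by
    rw [sval_map_mneg, x.2.2]⟩)
  constructor
  · rintro ⟨l, hl⟩ ⟨t, ht⟩ h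
    simp only [Subtype.mk.injEq] at h
    exact Subtype.ext (List.map_injective_iff.mpr mneg_invol.injective h)
  · rintro ⟨l, hlen, hsum⟩
    refine ⟨⟨l.map mneg, by simp [hlen], by rw [sval_map_mneg, hsum]; ring⟩, ?_⟩
    apply Subtype.ext
    simp [List.map_map, mneg_invol.comp_self]


open List Polynomial

lemma coeff_P_mul_zero (Q : Polynomial ℤ) :
    (((1:Polynomial ℤ) + 3*X + X^2) * Q).coeff 0 = Q.coeff 0 := by
  rw [mul_coeff_zero]
  simp

lemma coeff_P_mul_one (Q : Polynomial ℤ) :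
    (((1:Polynomial ℤ) + 3*X + X^2) * Q).coeff 1 = Q.coeff 1 + 3 * Q.coeff 0 := by
  rw [add_mul, add_mul, one_mul, coeff_add, coeff_add]
  have h1 : ((3:Polynomial ℤ)*X*Q).coeff 1 = 3 * Q.coeff 0 := by
    rw [mul_assoc, coeff_ofNat_mul, coeff_X_mul]
  have h2 : ((X^2 : Polynomial ℤ)*Q).coeff 1 = 0 := by
    have : (X^2 : Polynomial ℤ) * Q = X * (X * Q) := by ring
    rw [this, coeff_X_mul, mul_coeff_zero]
    simp
  rw [h1, h2]
  ring

lemma coeff_P_mul_two (Q : Polynomial ℤ) (i : ℕ) :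
    (((1:Polynomial ℤ) + 3*X + X^2) * Q).coeff (i+2)
      = Q.coeff (i+2) + 3 * Q.coeff (i+1) + Q.coeff i := by
  rw [add_mul, add_mul, one_mul, coeff_add, coeff_add]
  have h1 : ((3:Polynomial ℤ)*X*Q).coeff (i+2) = 3 * Q.coeff (i+1) := by
    rw [mul_assoc, coeff_ofNat_mul, coeff_X_mul]
  have h2 : ((X^2 : Polynomial ℤ)*Q).coeff (i+2) = Q.coeff i := coeff_X_pow_mul Q 2 i
  rw [h1, h2]

lemma trinom_succ (n : ℕ) (k : ℤ) :
    trinom (n+1) k = trinom n k + 3 * trinom n (k-1) + trinom n (k-2) := by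
  unfold trinom
  by_cases h0 : 0 ≤ k
  · have hpow : ((1 + 3 * X + X ^ 2 : Polynomial ℤ)) ^ (n+1)
        = ((1:Polynomial ℤ) + 3*X + X^2) * ((1 + 3 * X + X ^ 2 : Polynomial ℤ)) ^ n := by
      rw [pow_succ]; ring
    obtain ⟨j, rfl⟩ := Int.eq_ofNat_of_zero_le h0
    match j with
    | 0 =>
      simp only [if_pos h0]
      rw [hpow,
        if_neg (show ¬ (0:ℤ) ≤ ((0:ℕ):ℤ) - 1 by omega),
        if_neg (show ¬ (0:ℤ) ≤ ((0:ℕ):ℤ) - 2 by omega)]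
      have e1 : (((0:ℕ):ℤ)).toNat = 0 := rfl
      rw [e1, coeff_P_mul_zero]
      ring
    | 1 =>
      simp only [if_pos h0]
      rw [hpow,
        if_pos (show (0:ℤ) ≤ ((1:ℕ):ℤ) - 1 by omega),
        if_neg (show ¬ (0:ℤ) ≤ ((1:ℕ):ℤ) - 2 by omega)]
      have e1 : (((1:ℕ):ℤ)).toNat = 1 := rfl
      have e2 : ((((1:ℕ)):ℤ) - 1).toNat = 0 := by omega
      rw [e1, e2, coeff_P_mul_one]
      ring
    | (i+2) =>
      simp only [if_pos h0]
      rw [hpow,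
        if_pos (show (0:ℤ) ≤ ((i+2:ℕ):ℤ) - 1 by omega),
        if_pos (show (0:ℤ) ≤ ((i+2:ℕ):ℤ) - 2 by omega)]
      have e1 : (((i+2:ℕ):ℤ)).toNat = i + 2 := by omega
      have e2 : ((((i+2:ℕ)):ℤ) - 1).toNat = i + 1 := by omega
      have e3 : ((((i+2:ℕ)):ℤ) - 2).toNat = i := by omega
      rw [e1, e2, e3, coeff_P_mul_two]
  · rw [if_neg h0, if_neg (by omega), if_neg (by omega), if_neg (by omega)]; norm_num

lemma trinom_eq_Nk : ∀ (n : ℕ) (k : ℤ), trinom n k = (Nk n ((n:ℤ) - k) : ℤ) := by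
  intro n
  induction n with
  | zero =>
    intro k
    unfold trinom
    rw [Nk_zero]
    rcases lt_trichotomy k 0 with h | h | h
    · rw [if_neg (by omega), if_neg (by omega)]; norm_num
    · subst h; norm_num
    · rw [if_pos (by omega), if_neg (by omega)]
      have : k.toNat ≠ 0 := by omega
      simp [pow_zero, coeff_one, this]
  | succ n ih =>
    intro k
    rw [trinom_succ, ih, ih, ih]
    have e0 : ((n+1 : ℕ) : ℤ) - k = ((n:ℤ)+1) - k := by push_cast; ring
    have f1 : (n:ℤ) - k = (((n:ℤ)+1-k)) - 1 := by ring
    have f2 : (n:ℤ) - (k-1) = (((n:ℤ)+1-k)) := by ring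
    have f3 : (n:ℤ) - (k-2) = (((n:ℤ)+1-k)) + 1 := by ring
    rw [f1, f2, f3, e0, Nk_succ]
    push_cast
    ring


open List

lemma fzc_eq (m : ℕ) : ∀ h : ℤ, -1 ≤ h → (fzc m h : ℤ) = (Nk m h : ℤ) - Nk m (-h-2) := by
  induction m with
  | zero =>
    intro h hh
    by_cases h0 : h < 0
    · have : h = -1 := by omega
      subst this
      rw [fzc_neg 0 (-1) (by norm_num), Nk_zero, Nk_zero]
      norm_num
    · rw [fzc_zero, Nk_zero, Nk_zero]
      split_ifs <;> [skip; omega; skip; skip] <;> push_cast <;> omega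
  | succ m ih =>
    intro h hh
    by_cases h0 : h < 0
    · have : h = -1 := by omega
      subst this
      rw [fzc_neg (m+1) (-1) (by norm_num)]
      norm_num
    · push_neg at h0
      rw [fzc_succ m h h0]
      have r1 := Nk_succ m h
      have r2 := Nk_succ m (-h-2)
      have e1 : -h-2-1 = -h-3 := by ring
      have e2 : -h-2+1 = -h-1 := by ring
      rw [e1, e2] at r2
      by_cases h1 : h = 0
      · subst h1
        have i0 := ih 0 (by norm_num)
        have i1 := ih 1 (by norm_num)
        have ez : fzc m (0-1) = 0 := fzc_neg m _ (by norm_num)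
        norm_num at r1 r2 i0 i1 ez ⊢
        rw [ez]
        push_cast
        norm_num
        linarith
      · have i0 := ih (h-1) (by omega)
        have i1 := ih h (by omega)
        have i2 := ih (h+1) (by omega)
        have e3 : -(h-1)-2 = -h-1 := by ring
        have e4 : -(h+1)-2 = -h-3 := by ring
        rw [e3] at i0
        rw [e4] at i2
        push_cast
        push_cast at i0 i1 i2
        linarith

instance : Fintype SkewStep where
  elems := {SkewStep.up, SkewStep.down, SkewStep.red}
  complete := fun x => by cases x <;> simp

lemma isSkewPath_iff (l : List SkewStep) :
    IsSkewPath l 0 ↔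
      (l.Chain' SkewStep.ok ∧ NNP SkewStep.val l ∧ sval SkewStep.val l = 0) := by
  constructor
  · rintro ⟨⟨hc, hk⟩, hs⟩
    exact ⟨hc, (nnp_iff_take SkewStep.val l).mp hk, hs⟩
  · rintro ⟨hc, hn, hs⟩
    exact ⟨⟨hc, (nnp_iff_take SkewStep.val l).mpr hn⟩, hs⟩

lemma sk_val_ge : ∀ a : SkewStep, -1 ≤ SkewStep.val a := by decide
lemma sk_val_up {a : SkewStep} (h : 0 ≤ SkewStep.val a) : a = SkewStep.up := by
  revert h; cases a <;> decide
lemma sk_val_neg {a : SkewStep} (h : SkewStep.val a ≤ 0) :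
    SkewStep.val a = -1 := by revert h; cases a <;> decide

lemma skew_a0 : skewDyckCount 0 = 1 := by
  unfold skewDyckCount
  haveI : Unique {l : List SkewStep // l.length = 2*0 ∧ IsSkewPath l 0} :=
    { default := ⟨[], by norm_num, by
        rw [isSkewPath_iff]
        refine ⟨List.isChain_nil, ?_, by simp⟩
        intro t ht; rw [List.prefix_nil.mp ht]; simp⟩
      uniq := fun ⟨l, hl⟩ => Subtype.ext (by
        have : l.length = 0 := by simpa using hl.1
        exact List.length_eq_zero_iff.mp this) }
  exact Nat.card_unique

lemma skew_a1 : skewDyckCount 1 = 1 := by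
  unfold skewDyckCount
  haveI : Unique {l : List SkewStep // l.length = 2*1 ∧ IsSkewPath l 0} :=
    { default := ⟨[SkewStep.up, SkewStep.down], by norm_num, by
        rw [isSkewPath_iff]
        refine ⟨by simp [List.Chain', SkewStep.ok], ?_, by simp [SkewStep.val]⟩
        intro t ht
        rcases List.prefix_cons_iff.mp ht with rfl | ⟨t', rfl, ht'⟩
        · simp
        · rcases List.prefix_cons_iff.mp ht' with rfl | ⟨t'', rfl, ht''⟩
          · simp [SkewStep.val]
          · rw [List.prefix_nil.mp ht'']
            simp [SkewStep.val]⟩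
      uniq := fun ⟨l, hl⟩ => Subtype.ext (by
        obtain ⟨hlen, hp⟩ := hl
        rw [isSkewPath_iff] at hp
        obtain ⟨hc, hn, hs⟩ := hp
        match l, hlen with
        | [x, y], _ =>
          have hx : x = SkewStep.up := sk_val_up (by
            have := hn [x] ⟨[y], rfl⟩
            simpa using this)
          subst hx
          have hy : SkewStep.val y = -1 := by
            rw [sval_cons, sval_cons, sval_nil] at hs
            have hu : SkewStep.val SkewStep.up = 1 := rfl
            rw [hu] at hs
            omega
          have : y = SkewStep.down ∨ y = SkewStep.red := by
            revert hy; cases y <;> simp [SkewStep.val]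
          rcases this with rfl | rfl
          · rfl
          · exfalso
            have := List.isChain_cons_cons.mp hc
            exact this.1.1 ⟨rfl, rfl⟩) }
  exact Nat.card_unique


open List

def lvl (c : Fin 3) : Fin 5 := ⟨c.1 + 1, by omega⟩

lemma lvl_val : ∀ c : Fin 3, mval (lvl c) = 0 := by decide
lemma lvl_inj : ∀ c c' : Fin 3, lvl c = lvl c' → c = c' := by decide
lemma lvl_ne_zero : ∀ c : Fin 3, lvl c ≠ 0 := by decide
lemma mval_ge : ∀ a : Fin 5, -1 ≤ mval a := by decide
lemma mval_eq_negone : ∀ a : Fin 5, mval a = -1 → a = 4 := by decide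
lemma up_or_level : ∀ a : Fin 5, 0 ≤ mval a → a = 0 ∨ a = lvl 0 ∨ a = lvl 1 ∨ a = lvl 2 := by
  decide

lemma mz_rec (k : ℕ) :
    fzc (k+2) 0 = 3 * fzc (k+1) 0 + ∑ i ∈ Finset.range (k+1), fzc i 0 * fzc (k-i) 0 := by
  haveI := fun (m : ℕ) (s : ℤ) =>
    finite_cond (Fin 5) m (fun l => NNP mval l ∧ sval mval l = s)
  have key : Nat.card ((Fin 3 × {l : List (Fin 5) // l.length = k+1 ∧ (NNP mval l ∧ sval mval l = 0)})
      ⊕ (Σ i : Fin (k+1), {l : List (Fin 5) // l.length = i ∧ (NNP mval l ∧ sval mval l = 0)}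
          × {l : List (Fin 5) // l.length = k - i ∧ (NNP mval l ∧ sval mval l = 0)}))
      = Nat.card {l : List (Fin 5) // l.length = k+2 ∧ (NNP mval l ∧ sval mval l = 0)} := by
    apply Nat.card_eq_of_bijective (fun x => match x with
      | .inl (c, w) => ⟨lvl c :: w.1, by
          obtain ⟨hlen, hnn, hsum⟩ := w.2
          refine ⟨by simp [hlen], ?_, by rw [sval_cons, lvl_val, hsum]; ring⟩
          intro t ht
          rcases List.prefix_cons_iff.mp ht with rfl | ⟨t', rfl, ht'⟩
          · simp
          · rw [sval_cons, lvl_val]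
            have := hnn _ ht'
            omega⟩
      | .inr ⟨i, p, q⟩ => ⟨(0 : Fin 5) :: (p.1 ++ (4 : Fin 5) :: q.1), by
          obtain ⟨hlp, hnp, hsp⟩ := p.2
          obtain ⟨hlq, hnq, hsq⟩ := q.2
          refine ⟨?_, ?_, ?_⟩
          · have hik : (i : ℕ) ≤ k := by omega
            simp [hlp, hlq]
            omega
          · exact NNP.append_mid mval (u := (0 : Fin 5)) (x := (4 : Fin 5)) (by decide) (by decide) hnp hsp hnq
          · rw [sval_cons, sval_append, sval_cons, hsp, hsq]
            decide⟩)
    constructor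
    · rintro (⟨c, w⟩ | ⟨i, p, q⟩) (⟨c', w'⟩ | ⟨i', p', q'⟩) h <;>
        simp only [Subtype.mk.injEq, List.cons.injEq] at h
      · obtain ⟨h1, h2⟩ := h
        obtain rfl := lvl_inj _ _ h1
        obtain rfl : w = w' := Subtype.ext h2
        rfl
      · exact absurd h.1 (lvl_ne_zero c)
      · exact absurd h.1.symm (lvl_ne_zero c')
      · obtain ⟨-, h2⟩ := h
        have hlen : p.1.length = p'.1.length :=
          firstret_len_unique mval (x := (4:Fin 5)) (x' := (4:Fin 5)) (by decide) (by decide)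
            p.2.2.1 p'.2.2.1 p.2.2.2 p'.2.2.2 h2
        obtain ⟨h3, h4⟩ := List.append_inj h2 hlen
        have h5 : q.1 = q'.1 := by injection h4
        obtain rfl : i = i' := by
          apply Fin.ext
          rw [← p.2.1, ← p'.2.1, hlen]
        obtain rfl : p = p' := Subtype.ext h3
        obtain rfl : q = q' := Subtype.ext h5
        rfl
    · rintro ⟨l, hlen, hnn, hsum⟩
      cases l with
      | nil => simp at hlen
      | cons a t =>
        have ha : 0 ≤ mval a := by
          have := hnn [a] ⟨t, rfl⟩
          simpa using this
        have hlt : t.length = k + 1 := by simpa using hlen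
        rcases up_or_level a ha with rfl | hc
        · -- up step: first-return decomposition
          have hpre : ∀ r, r <+: t → -1 ≤ ((0:ℕ) : ℤ) + sval mval r := by
            intro r hr
            have := hnn (0 :: r) (List.cons_prefix_cons.mpr ⟨rfl, hr⟩)
            rw [sval_cons] at this
            have h0 : mval 0 = 1 := rfl
            push_cast
            omega
          have hsumt : ((0:ℕ) : ℤ) + sval mval t = -1 := by
            rw [sval_cons] at hsum
            have h0 : mval 0 = 1 := rfl
            push_cast
            omega
          obtain ⟨p, x, q, rfl, hx, hnp, hsp, hnq, hsq⟩ :=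
            first_hit mval mval_ge t 0 hpre hsumt
          obtain rfl := mval_eq_negone x hx
          have hplen : p.length ≤ k := by
            rw [List.length_append, List.length_cons] at hlt
            omega
          have hqlen : q.length = k - p.length := by
            rw [List.length_append, List.length_cons] at hlt
            omega
          refine ⟨Sum.inr ⟨⟨p.length, by omega⟩, ⟨p, rfl, ?_, ?_⟩, ⟨q, hqlen, hnq, hsq⟩⟩, rfl⟩
          · intro r hr
            have := hnp r hr
            push_cast at this
            omega
          · push_cast at hsp
            omega
        · -- level step
          have hnt : NNP mval t := by
            intro r hr
            have := hnn (a :: r) (List.cons_prefix_cons.mpr ⟨rfl, hr⟩)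
            rw [sval_cons] at this
            have h0 : mval a = 0 := by
              rcases hc with rfl | rfl | rfl <;> exact lvl_val _
            omega
          have hst : sval mval t = 0 := by
            rw [sval_cons] at hsum
            have h0 : mval a = 0 := by
              rcases hc with rfl | rfl | rfl <;> exact lvl_val _
            omega
          rcases hc with rfl | rfl | rfl
          · exact ⟨Sum.inl (0, ⟨t, hlt, hnt, hst⟩), rfl⟩
          · exact ⟨Sum.inl (1, ⟨t, hlt, hnt, hst⟩), rfl⟩
          · exact ⟨Sum.inl (2, ⟨t, hlt, hnt, hst⟩), rfl⟩
  unfold fzc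
  rw [← key, Nat.card_sum, Nat.card_prod, card_sigma']
  have h3 : Nat.card (Fin 3) = 3 := by simp
  rw [h3]
  congr 1
  simp only [Nat.card_prod]
  exact Fin.sum_univ_eq_sum_range
    (fun i => Nat.card {l : List (Fin 5) // l.length = i ∧ (NNP mval l ∧ sval mval l = 0)} *
      Nat.card {l : List (Fin 5) // l.length = k - i ∧ (NNP mval l ∧ sval mval l = 0)}) (k+1)


open List

lemma ok_any_down : ∀ a : SkewStep, SkewStep.ok a SkewStep.down := by
  intro a
  unfold SkewStep.ok
  exact ⟨fun h => (nomatch h.2), fun h => (nomatch h.2)⟩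
lemma ok_down_any : ∀ a : SkewStep, SkewStep.ok SkewStep.down a := by
  intro a
  unfold SkewStep.ok
  exact ⟨fun h => (nomatch h.1), fun h => (nomatch h.1)⟩
lemma ok_up_up : SkewStep.ok SkewStep.up SkewStep.up := by
  unfold SkewStep.ok
  exact ⟨fun h => (nomatch h.2), fun h => (nomatch h.1)⟩
lemma ok_red_of : ∀ a : SkewStep, SkewStep.val a ≤ 0 → SkewStep.ok a SkewStep.red := by
  intro a h
  cases a with
  | up => simp [SkewStep.val] at h
  | down =>
    unfold SkewStep.ok
    exact ⟨fun h' => (nomatch h'.1), fun h' => (nomatch h'.1)⟩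
  | red =>
    unfold SkewStep.ok
    exact ⟨fun h' => (nomatch h'.1), fun h' => (nomatch h'.2)⟩
lemma not_ok_red_up : ¬ SkewStep.ok SkewStep.red SkewStep.up := fun h => h.2 ⟨rfl, rfl⟩
lemma sk_val_cases : ∀ a : SkewStep, SkewStep.val a = -1 →
    a = SkewStep.down ∨ a = SkewStep.red := by
  intro a h
  cases a with
  | up => simp [SkewStep.val] at h
  | down => exact Or.inl rfl
  | red => exact Or.inr rfl
lemma sk_val_up' : SkewStep.val SkewStep.up = 1 := rfl

lemma sk_parity : ∀ l : List SkewStep, 2 ∣ ((l.length : ℤ) - sval SkewStep.val l) := by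
  intro l
  induction l with
  | nil => simp
  | cons a t ih =>
    rw [sval_cons, List.length_cons]
    have h1 : SkewStep.val a = 1 ∨ SkewStep.val a = -1 := by cases a <;> simp [SkewStep.val]
    push_cast
    rcases h1 with h1 | h1 <;> rw [h1] <;> omega

lemma chain_up_mid {p q : List SkewStep} (x : SkewStep)
    (hp : p.Chain' SkewStep.ok) (hq : q.Chain' SkewStep.ok)
    (hnp : NNP SkewStep.val p)
    (hlast : ∀ y ∈ (SkewStep.up :: p).getLast?, SkewStep.ok y x)
    (hxq : ∀ y ∈ q.head?, SkewStep.ok x y) :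
    (SkewStep.up :: (p ++ x :: q)).Chain' SkewStep.ok := by
  have e : SkewStep.up :: (p ++ x :: q) = (SkewStep.up :: p) ++ (x :: q) := rfl
  rw [e, List.Chain', List.isChain_append]
  refine ⟨?_, ?_, ?_⟩
  · rw [List.isChain_cons]
    refine ⟨?_, hp⟩
    intro y hy
    have hyp : [y] <+: p := by
      cases p with
      | nil => simp at hy
      | cons a p' =>
        obtain rfl : a = y := by simpa using hy
        exact ⟨p', rfl⟩
    have hyu : y = SkewStep.up := sk_val_up (by simpa using hnp [y] hyp)
    subst hyu
    exact ok_up_up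
  · rw [List.isChain_cons]
    exact ⟨hxq, hq⟩
  · intro a ha y hy
    obtain rfl : x = y := by simpa using hy
    exact hlast a ha

lemma skew_rec (n : ℕ) :
    skewDyckCount (n+2) =
      (∑ i ∈ Finset.range (n+2), skewDyckCount i * skewDyckCount (n+1-i))
        + skewDyckCount (n+1) := by
  haveI := fun (m : ℕ) => finite_cond SkewStep m (fun l => IsSkewPath l 0)
  have key : Nat.card
      ((Σ i : Fin (n+2), {l : List SkewStep // l.length = 2*(i:ℕ) ∧ IsSkewPath l 0}
          × {l : List SkewStep // l.length = 2*(n+1-(i:ℕ)) ∧ IsSkewPath l 0})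
        ⊕ {l : List SkewStep // l.length = 2*(n+1) ∧ IsSkewPath l 0})
      = Nat.card {l : List SkewStep // l.length = 2*(n+2) ∧ IsSkewPath l 0} := by
    apply Nat.card_eq_of_bijective (fun x => match x with
      | .inl ⟨i, p, q⟩ => ⟨SkewStep.up :: (p.1 ++ SkewStep.down :: q.1), by
          obtain ⟨hlp, hpp⟩ := p.2
          obtain ⟨hlq, hpq⟩ := q.2
          rw [isSkewPath_iff] at hpp hpq
          obtain ⟨hc1, hn1, hs1⟩ := hpp
          obtain ⟨hc2, hn2, hs2⟩ := hpq
          refine ⟨?_, ?_⟩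
          · have hik : (i : ℕ) ≤ n + 1 := by have := i.isLt; omega
            simp [hlp, hlq]
            omega
          · rw [isSkewPath_iff]
            refine ⟨chain_up_mid _ hc1 hc2 hn1
              (fun y _ => ok_any_down y) (fun y _ => ok_down_any y), ?_, ?_⟩
            · exact NNP.append_mid SkewStep.val (u := SkewStep.up) (x := SkewStep.down) rfl rfl hn1 hs1 hn2
            · rw [sval_cons, sval_append, sval_cons, hs1, hs2]
              decide⟩
      | .inr p => ⟨SkewStep.up :: (p.1 ++ [SkewStep.red]), by
          obtain ⟨hlp, hpp⟩ := p.2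
          rw [isSkewPath_iff] at hpp
          obtain ⟨hc1, hn1, hs1⟩ := hpp
          have hne : p.1 ≠ [] := by
            intro h
            rw [h] at hlp
            simp at hlp
          refine ⟨by simp [hlp]; ring, ?_⟩
          rw [isSkewPath_iff]
          refine ⟨?_, ?_, ?_⟩
          · refine chain_up_mid _ hc1 List.isChain_nil hn1 ?_ (by simp)
            intro y hy
            rw [List.getLast?_eq_getLast (List.cons_ne_nil _ _)] at hy
            obtain rfl : (SkewStep.up :: p.1).getLast (List.cons_ne_nil _ _) = y := by
              simpa using hy
            rw [List.getLast_cons hne]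
            exact ok_red_of _ (by
              have := hn1.last_nonpos hs1 hne
              omega)
          · exact NNP.append_mid SkewStep.val (u := SkewStep.up) (x := SkewStep.red) rfl rfl hn1 hs1
              (fun t ht => by rw [List.prefix_nil.mp ht]; simp)
          · rw [sval_cons, sval_append, sval_cons, hs1]
            decide⟩)
    constructor
    · rintro (⟨i, p, q⟩ | p) (⟨i', p', q'⟩ | p') h <;>
        simp only [Subtype.mk.injEq, List.cons.injEq] at h
      · -- inl inl
        have hnp := ((isSkewPath_iff _).mp p.2.2).2.1
        have hsp := ((isSkewPath_iff _).mp p.2.2).2.2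
        have hnp' := ((isSkewPath_iff _).mp p'.2.2).2.1
        have hsp' := ((isSkewPath_iff _).mp p'.2.2).2.2
        have hlen : p.1.length = p'.1.length :=
          firstret_len_unique SkewStep.val (x := SkewStep.down) (x' := SkewStep.down)
            rfl rfl hnp hnp' hsp hsp' h.2
        obtain ⟨h3, h4⟩ := List.append_inj h.2 hlen
        have h5 : q.1 = q'.1 := by injection h4
        obtain rfl : i = i' := by
          apply Fin.ext
          have := p.2.1; have := p'.2.1
          omega
        obtain rfl : p = p' := Subtype.ext h3
        obtain rfl : q = q' := Subtype.ext h5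
        rfl
      · -- inl inr : down-path vs red-path
        exfalso
        have hnp := ((isSkewPath_iff _).mp p.2.2).2.1
        have hsp := ((isSkewPath_iff _).mp p.2.2).2.2
        have hnp' := ((isSkewPath_iff _).mp p'.2.2).2.1
        have hsp' := ((isSkewPath_iff _).mp p'.2.2).2.2
        have h2 : p.1 ++ SkewStep.down :: q.1 = p'.1 ++ SkewStep.red :: [] := by
          simpa using h
        have hlen : p.1.length = p'.1.length :=
          firstret_len_unique SkewStep.val (x := SkewStep.down) (x' := SkewStep.red)
            rfl rfl hnp hnp' hsp hsp' h2
        obtain ⟨h3, h4⟩ := List.append_inj h2 hlen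
        have : SkewStep.down = SkewStep.red := by injection h4
        exact absurd this (by decide)
      · -- inr inl
        exfalso
        have hnp := ((isSkewPath_iff _).mp p.2.2).2.1
        have hsp := ((isSkewPath_iff _).mp p.2.2).2.2
        have hnp' := ((isSkewPath_iff _).mp p'.2.2).2.1
        have hsp' := ((isSkewPath_iff _).mp p'.2.2).2.2
        have h2 : p.1 ++ SkewStep.red :: [] = p'.1 ++ SkewStep.down :: q'.1 := by
          simpa using h
        have hlen : p.1.length = p'.1.length :=
          firstret_len_unique SkewStep.val (x := SkewStep.red) (x' := SkewStep.down)
            rfl rfl hnp hnp' hsp hsp' h2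
        obtain ⟨h3, h4⟩ := List.append_inj h2 hlen
        have : SkewStep.red = SkewStep.down := by injection h4
        exact absurd this (by decide)
      · -- inr inr
        have h2 : p.1 ++ [SkewStep.red] = p'.1 ++ [SkewStep.red] := by simpa using h
        have hlen : p.1.length = p'.1.length := by
          have := congrArg List.length h2
          simp at this
          omega
        obtain ⟨h3, h4⟩ := List.append_inj h2 hlen
        obtain rfl : p = p' := Subtype.ext h3
        rfl
    · rintro ⟨l, hlen, hsk⟩
      rw [isSkewPath_iff] at hsk
      obtain ⟨hc, hn, hs⟩ := hsk
      cases l with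
      | nil => simp at hlen
      | cons a t =>
        obtain rfl : a = SkewStep.up := sk_val_up (by
          have := hn [a] ⟨t, rfl⟩
          simpa using this)
        have hct : t.Chain' SkewStep.ok := hc.tail
        have hlt : t.length = 2*n + 3 := by
          simp at hlen
          omega
        have hpre : ∀ r, r <+: t → -1 ≤ ((0:ℕ) : ℤ) + sval SkewStep.val r := by
          intro r hr
          have := hn (SkewStep.up :: r) (List.cons_prefix_cons.mpr ⟨rfl, hr⟩)
          rw [sval_cons, sk_val_up'] at this
          push_cast
          omega
        have hsumt : ((0:ℕ) : ℤ) + sval SkewStep.val t = -1 := by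
          rw [sval_cons, sk_val_up'] at hs
          push_cast
          omega
        obtain ⟨p, x, q, rfl, hx, hnp0, hsp0, hnq, hsq⟩ :=
          first_hit SkewStep.val sk_val_ge t 0 hpre hsumt
        have hnp : NNP SkewStep.val p := by
          intro r hr
          have := hnp0 r hr
          push_cast at this
          omega
        have hsp : sval SkewStep.val p = 0 := by push_cast at hsp0; omega
        have hcp : p.Chain' SkewStep.ok := hct.prefix ⟨x :: q, rfl⟩
        have hcq : q.Chain' SkewStep.ok := hct.infix ⟨p ++ [x], [], by simp⟩
        rcases sk_val_cases x hx with rfl | rfl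
        · -- down
          have hpar : 2 ∣ p.length := by
            have := sk_parity p
            rw [hsp] at this
            omega
          obtain ⟨i, hi⟩ := hpar
          have hplen : p.length + 1 + q.length = 2*n + 3 := by
            rw [List.length_append, List.length_cons] at hlt
            omega
          have hile : i ≤ n + 1 := by omega
          refine ⟨Sum.inl ⟨⟨i, by omega⟩,
            ⟨p, by show p.length = 2*i; omega, ?_⟩,
            ⟨q, by show q.length = 2*(n+1-i); omega, ?_⟩⟩, rfl⟩
          · rw [isSkewPath_iff]; exact ⟨hcp, hnp, hsp⟩
          · rw [isSkewPath_iff]; exact ⟨hcq, hnq, hsq⟩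
        · -- red: q must be empty
          obtain rfl : q = [] := by
            by_contra hqne
            have hch : (SkewStep.red :: q).Chain' SkewStep.ok :=
              hct.infix ⟨p, [], by simp⟩
            have := (List.isChain_cons.mp hch).1 (q.head hqne) (List.head?_eq_head hqne)
            have hup : q.head hqne = SkewStep.up := sk_val_up (by
              have h9 := hnq [q.head hqne] ⟨q.tail, by simp⟩
              simpa using h9)
            rw [hup] at this
            exact not_ok_red_up this
          refine ⟨Sum.inr ⟨p, ?_, ?_⟩, rfl⟩
          · rw [List.length_append, List.length_cons, List.length_nil] at hlt
            omega
          · rw [isSkewPath_iff]; exact ⟨hcp, hnp, hsp⟩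
  unfold skewDyckCount
  rw [← key, Nat.card_sum, card_sigma']
  have e1 : ∀ i : Fin (n+2),
      Nat.card ({l : List SkewStep // l.length = 2*(i:ℕ) ∧ IsSkewPath l 0}
        × {l : List SkewStep // l.length = 2*(n+1-(i:ℕ)) ∧ IsSkewPath l 0})
      = Nat.card {l : List SkewStep // l.length = 2*(i:ℕ) ∧ IsSkewPath l 0}
        * Nat.card {l : List SkewStep // l.length = 2*(n+1-(i:ℕ)) ∧ IsSkewPath l 0} :=
    fun i => Nat.card_prod _ _
  congr 1
  simp only [Nat.card_prod]
  exact Fin.sum_univ_eq_sum_range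
    (fun i => Nat.card {l : List SkewStep // l.length = 2*i ∧ IsSkewPath l 0} *
      Nat.card {l : List SkewStep // l.length = 2*(n+1-i) ∧ IsSkewPath l 0}) (n+2)


open List

lemma fzc00 : fzc 0 0 = 1 := by rw [fzc_zero]; simp

lemma fzc10 : fzc 1 0 = 3 := by
  rw [fzc_succ 0 0 le_rfl, fzc_zero, fzc_zero, fzc_zero]
  norm_num

lemma skew_eq_mz : ∀ n : ℕ, skewDyckCount (n+1) = fzc n 0 := by
  intro n
  induction n using Nat.strong_induction_on with
  | _ n ih =>
    match n with
    | 0 => rw [skew_a1, fzc00]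
    | 1 =>
      have h1 := skew_rec 0
      rw [Finset.sum_range_succ, Finset.sum_range_succ, Finset.sum_range_zero] at h1
      norm_num [skew_a0, skew_a1] at h1
      rw [h1, fzc10]
    | (m+2) =>
      have h1 := skew_rec (m+1)
      have h2 : skewDyckCount (m+1+1) = fzc (m+1) 0 := ih (m+1) (by omega)
      rw [Finset.sum_range_succ'] at h1
      rw [Finset.sum_range_succ] at h1
      have hsum : ∀ i ∈ Finset.range (m+1),
          skewDyckCount (i+1) * skewDyckCount (m+1+1-(i+1)) = fzc i 0 * fzc (m-i) 0 := by
        intro i hi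
        simp only [Finset.mem_range] at hi
        have e2 : m+1+1-(i+1) = (m-i)+1 := by omega
        rw [e2, ih i (by omega), ih (m-i) (by omega)]
      rw [Finset.sum_congr rfl hsum] at h1
      have e4 : m+1+1-(m+1+1) = 0 := by omega
      have e5 : m+1+1-0 = m+1+1 := by omega
      rw [e4, e5, skew_a0, h2] at h1
      have e7 : m+1+2 = m+2+1 := by omega
      rw [e7] at h1
      rw [h1, mz_rec m]
      ring



end SkewProof

/-- For `n ≥ 1`, the number of skew Dyck paths of semilength `n` equals
`C(n-1;n) + C(n-1;n-1) - C(n-1;n-2) - C(n-1;n-3)` where `C(m;k)` is the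
weighted trinomial coefficient `[t^k](1+3t+t²)^m`. -/
theorem skewDyck_trinomial (n : ℕ) (hn : 1 ≤ n) :
    (skewDyckCount n : ℤ) =
      trinom (n - 1) (n : ℤ) + trinom (n - 1) ((n : ℤ) - 1)
        - trinom (n - 1) ((n : ℤ) - 2) - trinom (n - 1) ((n : ℤ) - 3) := by
  obtain ⟨m, rfl⟩ : ∃ m, n = m + 1 := ⟨n - 1, by omega⟩
  simp only [Nat.add_sub_cancel]
  rw [SkewProof.skew_eq_mz m]
  have h0 := SkewProof.fzc_eq m 0 (by norm_num)
  have e0 : -(0:ℤ)-2 = -2 := by ring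
  rw [e0] at h0
  have t1 := SkewProof.trinom_eq_Nk m ((m+1 : ℕ) : ℤ)
  have t2 := SkewProof.trinom_eq_Nk m (((m+1 : ℕ) : ℤ) - 1)
  have t3 := SkewProof.trinom_eq_Nk m (((m+1 : ℕ) : ℤ) - 2)
  have t4 := SkewProof.trinom_eq_Nk m (((m+1 : ℕ) : ℤ) - 3)
  have a1 : (m:ℤ) - ((m+1 : ℕ) : ℤ) = -1 := by push_cast; ring
  have a2 : (m:ℤ) - (((m+1 : ℕ) : ℤ) - 1) = 0 := by push_cast; ring
  have a3 : (m:ℤ) - (((m+1 : ℕ) : ℤ) - 2) = 1 := by push_cast; ring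
  have a4 : (m:ℤ) - (((m+1 : ℕ) : ℤ) - 3) = 2 := by push_cast; ring
  rw [a1] at t1
  rw [a2] at t2
  rw [a3] at t3
  rw [a4] at t4
  have s1 : SkewProof.Nk m (-1) = SkewProof.Nk m 1 := by
    have := SkewProof.Nk_symm m (-1)
    simpa using this
  have s2 : SkewProof.Nk m 2 = SkewProof.Nk m (-2) := SkewProof.Nk_symm m 2
  rw [t1, t2, t3, t4, s1, s2, h0]
  push_cast
  ring
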